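/- There exists an absolute constant C such that the function f(z) = log|η(z)| (η(z)=z+sqrt(z²-1), extended by 0 on [-1,1]) satisfies |f(z) - f(z₀)| ≤ C·ε^{1/2} whenever |z - z₀| ≤ ε·max{2, |z₀|} and 0 ≤ ε ≤ 1/8, for all z, z₀ ∈ ℂ. -/

import Mathlib

open Complex Real

/-- The complement of the segment `[-1,1] ⊆ ℝ ⊆ ℂ`. -/
def slitPlane' : Set ℂ := {z : ℂ | ¬(z.im = 0 ∧ -1 ≤ z.re ∧ z.re ≤ 1)}

section Helpers

lemma sinh_decomp (ζ : ℂ) : Complex.sinh ζ =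
    (Real.sinh ζ.re * Real.cos ζ.im : ℝ) + (Real.cosh ζ.re * Real.sin ζ.im : ℝ) * Complex.I := by
  have : ζ = (ζ.re : ℂ) + (ζ.im : ℂ) * Complex.I := (Complex.re_add_im ζ).symm
  nth_rewrite 1 [this]
  rw [Complex.sinh_add, Complex.sinh_mul_I, Complex.cosh_mul_I,
    ← Complex.ofReal_sinh, ← Complex.ofReal_cosh, ← Complex.ofReal_sin, ← Complex.ofReal_cos]
  push_cast
  ring

lemma cosh_decomp (ζ : ℂ) : Complex.cosh ζ =
    (Real.cosh ζ.re * Real.cos ζ.im : ℝ) + (Real.sinh ζ.re * Real.sin ζ.im : ℝ) * Complex.I := by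
  have : ζ = (ζ.re : ℂ) + (ζ.im : ℂ) * Complex.I := (Complex.re_add_im ζ).symm
  nth_rewrite 1 [this]
  rw [Complex.cosh_add, Complex.sinh_mul_I, Complex.cosh_mul_I,
    ← Complex.ofReal_sinh, ← Complex.ofReal_cosh, ← Complex.ofReal_sin, ← Complex.ofReal_cos]
  push_cast
  ring

lemma real_sinh_abs (x : ℝ) : Real.sinh |x| = |Real.sinh x| := by
  rcases le_or_gt 0 x with h | h
  · rw [_root_.abs_of_nonneg h, _root_.abs_of_nonneg (Real.sinh_nonneg_iff.2 h)]
  · rw [_root_.abs_of_neg h, _root_.abs_of_nonpos (Real.sinh_nonpos_iff.2 h.le), Real.sinh_neg]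

lemma sinh_lower (ζ : ℂ) : Real.sinh |ζ.re| ≤ ‖Complex.sinh ζ‖ := by
  have h2 : (‖Complex.sinh ζ‖)^2 = (Real.sinh ζ.re)^2 + (Real.sin ζ.im)^2 := by
    rw [Complex.sq_norm, Complex.normSq_apply, sinh_decomp]
    simp [Complex.sinh_ofReal_re, Complex.cosh_ofReal_re, Complex.sin_ofReal_re, Complex.cos_ofReal_re]
    nlinarith [Real.sin_sq_add_cos_sq ζ.im, Real.cosh_sq ζ.re]
  rw [real_sinh_abs]
  nlinarith [norm_nonneg (Complex.sinh ζ), abs_nonneg (Real.sinh ζ.re), h2,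
    sq_nonneg (Real.sin ζ.im), _root_.sq_abs (Real.sinh ζ.re)]

lemma cosh_upper (ζ : ℂ) : ‖Complex.cosh ζ‖ ≤ Real.cosh ζ.re := by
  have h2 : (‖Complex.cosh ζ‖)^2 = (Real.cosh ζ.re)^2 - (Real.sin ζ.im)^2 := by
    rw [Complex.sq_norm, Complex.normSq_apply, cosh_decomp]
    simp [Complex.sinh_ofReal_re, Complex.cosh_ofReal_re, Complex.sin_ofReal_re, Complex.cos_ofReal_re]
    nlinarith [Real.sin_sq_add_cos_sq ζ.im, Real.cosh_sq ζ.re]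
  nlinarith [norm_nonneg (Complex.cosh ζ), Real.cosh_pos ζ.re, sq_nonneg (Real.sin ζ.im)]

lemma cosh_sub_cosh' (w w₀ : ℂ) : Complex.cosh w - Complex.cosh w₀ =
    2 * Complex.sinh ((w + w₀)/2) * Complex.sinh ((w - w₀)/2) := by
  have e1 := Complex.cosh_add ((w + w₀)/2) ((w - w₀)/2)
  have e2 := Complex.cosh_sub ((w + w₀)/2) ((w - w₀)/2)
  rw [show (w + w₀)/2 + (w - w₀)/2 = w by ring] at e1
  rw [show (w + w₀)/2 - (w - w₀)/2 = w₀ by ring] at e2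
  linear_combination e1 - e2

lemma le_of_sq_le' {a b : ℝ} (ha : 0 ≤ a) (hb : 0 ≤ b) (h : a^2 ≤ b^2) : a ≤ b := by
  have := Real.sqrt_le_sqrt h
  rwa [Real.sqrt_sq ha, Real.sqrt_sq hb] at this

lemma slit_iff (z : ℂ) : z ∈ slitPlane' ↔ z.im ≠ 0 ∨ 1 < z.re ∨ z.re < -1 := by
  rw [slitPlane', Set.mem_setOf_eq]
  constructor
  · intro h
    by_cases him : z.im = 0
    · rcases lt_or_ge 1 z.re with h1 | h1
      · exact Or.inr (Or.inl h1)
      · rcases lt_or_ge z.re (-1) with h2 | h2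
        · exact Or.inr (Or.inr h2)
        · exact absurd ⟨him, h2, h1⟩ h
    · exact Or.inl him
  · rintro (h | h | h) ⟨h1, h2, h3⟩ <;> [exact h h1; linarith; linarith]

lemma slit_preconnected : IsPreconnected slitPlane' := by
  have heq : slitPlane' = ({z : ℂ | 1 < z.re} ∪ {z : ℂ | 0 < z.im} ∪ {z : ℂ | z.im < 0})
      ∪ {z : ℂ | z.re < -1} := by
    ext z
    simp only [Set.mem_union, Set.mem_setOf_eq, slit_iff, ne_iff_lt_or_gt]
    tauto
  rw [heq]
  have c1 : IsPreconnected {z : ℂ | 1 < z.re} := (convex_halfSpace_re_gt 1).isPreconnected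
  have c2 : IsPreconnected {z : ℂ | 0 < z.im} := (convex_halfSpace_im_gt 0).isPreconnected
  have c3 : IsPreconnected {z : ℂ | z.im < 0} := (convex_halfSpace_im_lt 0).isPreconnected
  have c4 : IsPreconnected {z : ℂ | z.re < -1} := (convex_halfSpace_re_lt (-1)).isPreconnected
  have u1 : IsPreconnected ({z : ℂ | 1 < z.re} ∪ {z : ℂ | 0 < z.im}) := by
    apply IsPreconnected.union (2 + Complex.I) _ _ c1 c2 <;> norm_num
  have u2 : IsPreconnected ({z : ℂ | 1 < z.re} ∪ {z : ℂ | 0 < z.im} ∪ {z : ℂ | z.im < 0}) := by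
    apply IsPreconnected.union (2 - Complex.I) _ _ u1 c3 <;> norm_num
  apply IsPreconnected.union (-2 + Complex.I) _ _ u2 c4 <;> norm_num

end Helpers

section Eta

variable (η : ℂ → ℂ) (f : ℂ → ℝ)
variable (hη_sq : ∀ z ∈ slitPlane', (η z - z) ^ 2 = z ^ 2 - 1)
include hη_sq

lemma eta_inv : ∀ z ∈ slitPlane', η z * (2*z - η z) = 1 := by
  intro z hz
  linear_combination -(hη_sq z hz)

lemma eta_ne : ∀ z ∈ slitPlane', η z ≠ 0 := by
  intro z hz h0
  have := eta_inv η hη_sq z hz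
  rw [h0] at this; simp at this

lemma eta_abs_ne_one : ∀ z ∈ slitPlane', ‖η z‖ ≠ 1 := by
  intro z hz h1
  have hinv := eta_inv η hη_sq z hz
  have hc : η z * (starRingEnd ℂ) (η z) = 1 := by
    rw [Complex.mul_conj]
    norm_cast
    rw [Complex.normSq_eq_norm_sq, h1]; norm_num
  have hz2 : 2*z - η z = (starRingEnd ℂ) (η z) :=
    mul_left_cancel₀ (eta_ne η hη_sq z hz) (hinv.trans hc.symm)
  have hzr : 2*z = η z + (starRingEnd ℂ) (η z) := by linear_combination hz2
  rw [Complex.add_conj] at hzr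
  have hzre : z = ((η z).re : ℂ) := by
    push_cast at hzr
    linear_combination hzr/2
  have him : z.im = 0 := by rw [hzre]; simp
  have hre : |z.re| ≤ 1 := by
    rw [hzre]; simp
    calc |(η z).re| ≤ ‖η z‖ := Complex.abs_re_le_norm _
    _ = 1 := h1
  rcases (slit_iff z).1 hz with h | h | h
  · exact h him
  · rw [abs_le] at hre; linarith
  · rw [abs_le] at hre; linarith

lemma eta_abs_gt (hη_holo : DifferentiableOn ℂ η slitPlane')
    (hη_real : ∀ x : ℝ, 1 < x → η x = ((η x).re : ℂ) ∧ 1 < (η x).re) :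
    ∀ z ∈ slitPlane', 1 < ‖η z‖ := by
  have h2mem : (2:ℂ) ∈ slitPlane' := by rw [slit_iff]; norm_num
  have h2 : 1 < ‖η 2‖ := by
    obtain ⟨heq, hgt⟩ := hη_real 2 one_lt_two
    have : ((2:ℝ):ℂ) = (2:ℂ) := by norm_num
    rw [this] at heq hgt
    rw [heq, Complex.norm_real, Real.norm_eq_abs]
    exact lt_of_lt_of_le hgt (le_abs_self _)
  intro z hz
  rcases lt_or_gt_of_ne (eta_abs_ne_one η hη_sq z hz) with hlt | hgt
  · exfalso
    have hcont : ContinuousOn (fun z => ‖η z‖) slitPlane' :=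
      continuous_norm.comp_continuousOn hη_holo.continuousOn
    have himg := (slit_preconnected.image _ hcont).ordConnected
    have h1mem : (1:ℝ) ∈ (fun z => ‖η z‖) '' slitPlane' :=
      himg.out ⟨z, hz, rfl⟩ ⟨2, h2mem, rfl⟩ ⟨hlt.le, h2.le⟩
    obtain ⟨z', hz', h1'⟩ := h1mem
    exact eta_abs_ne_one η hη_sq z' hz' h1'
  · exact hgt

lemma eta_cosh_log : ∀ z ∈ slitPlane', Complex.cosh (Complex.log (η z)) = z := by
  intro z hz
  have hne := eta_ne η hη_sq z hz
  have hexp : Complex.exp (Complex.log (η z)) = η z := Complex.exp_log hne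
  have hinv : (η z)⁻¹ = 2*z - η z := inv_eq_of_mul_eq_one_right (eta_inv η hη_sq z hz)
  rw [Complex.cosh, hexp, Complex.exp_neg, hexp, hinv]
  ring

variable (hgt : ∀ z ∈ slitPlane', 1 < ‖η z‖)
variable (hf_on : ∀ z ∈ slitPlane', f z = Real.log (‖η z‖))
include hgt hf_on

omit hη_sq in
lemma f_nonneg : ∀ z ∈ slitPlane', 0 ≤ f z := by
  intro z hz
  rw [hf_on z hz]
  exact Real.log_nonneg (hgt z hz).le

omit hgt in
lemma coshf : ∀ z ∈ slitPlane', ‖z‖ ≤ Real.cosh (f z) := by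
  intro z hz
  have ha : (Complex.log (η z)).re = f z := by rw [hf_on z hz, Complex.log_re]
  calc ‖z‖ = ‖Complex.cosh (Complex.log (η z))‖ := by
        rw [eta_cosh_log η hη_sq z hz]
    _ ≤ Real.cosh (Complex.log (η z)).re := cosh_upper _
    _ = Real.cosh (f z) := by rw [ha]

lemma key_ineq : ∀ z ∈ slitPlane', ∀ z₀ ∈ slitPlane',
    |f z - f z₀| * Real.sinh ((f z + f z₀)/2) ≤ ‖z - z₀‖ := by
  intro z hz z₀ hz₀
  set w := Complex.log (η z) with hw
  set w₀ := Complex.log (η z₀) with hw₀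
  have ha : w.re = f z := by rw [hf_on z hz, hw, Complex.log_re]
  have ha₀ : w₀.re = f z₀ := by rw [hf_on z₀ hz₀, hw₀, Complex.log_re]
  have hfz := f_nonneg η f hgt hf_on z hz
  have hfz₀ := f_nonneg η f hgt hf_on z₀ hz₀
  have hres : ((w - w₀)/2).re = (f z - f z₀)/2 := by
    rw [← ha, ← ha₀]; simp [Complex.div_re, Complex.normSq]
  have hret : ((w + w₀)/2).re = (f z + f z₀)/2 := by
    rw [← ha, ← ha₀]; simp [Complex.div_re, Complex.normSq]
  have hid : z - z₀ = 2 * Complex.sinh ((w + w₀)/2) * Complex.sinh ((w - w₀)/2) := by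
    rw [← eta_cosh_log η hη_sq z hz, ← eta_cosh_log η hη_sq z₀ hz₀]
    exact cosh_sub_cosh' w w₀
  have hs1 : Real.sinh |((w - w₀)/2).re| ≤ ‖Complex.sinh ((w - w₀)/2)‖ :=
    sinh_lower _
  have hs2 : Real.sinh |((w + w₀)/2).re| ≤ ‖Complex.sinh ((w + w₀)/2)‖ :=
    sinh_lower _
  rw [hres] at hs1
  rw [hret] at hs2
  rw [_root_.abs_of_nonneg (by linarith : (0:ℝ) ≤ (f z + f z₀)/2)] at hs2
  have habs : |f z - f z₀| ≤ 2 * Real.sinh |(f z - f z₀)/2| := by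
    have h1 : |(f z - f z₀)/2| ≤ Real.sinh |(f z - f z₀)/2| :=
      (Real.self_le_sinh_iff).2 (abs_nonneg _)
    have h2 : |(f z - f z₀)/2| = |f z - f z₀|/2 := by
      rw [abs_div]; norm_num
    rw [h2] at h1 ⊢
    linarith
  have hsinh_nonneg : 0 ≤ Real.sinh ((f z + f z₀)/2) := Real.sinh_nonneg_iff.2 (by linarith)
  calc |f z - f z₀| * Real.sinh ((f z + f z₀)/2)
      ≤ (2 * Real.sinh |(f z - f z₀)/2|) * Real.sinh ((f z + f z₀)/2) :=
        mul_le_mul_of_nonneg_right habs hsinh_nonneg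
    _ ≤ (2 * ‖Complex.sinh ((w - w₀)/2)‖) * ‖Complex.sinh ((w + w₀)/2)‖ := by
        apply mul_le_mul (by linarith) hs2 hsinh_nonneg
        positivity
    _ = ‖z - z₀‖ := by
        rw [hid, norm_mul, norm_mul]
        simp
        ring

lemma boundary_est : ∀ x₀ t : ℝ, |x₀| ≤ 1 → 0 < t → t ≤ 1 →
    f ((x₀ : ℂ) + t * Complex.I) ≤ 5 * Real.sqrt t := by
  intro x₀ t hx ht ht1
  set z' : ℂ := (x₀ : ℂ) + t * Complex.I with hz'def
  have hz'im : z'.im = t := by simp [hz'def]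
  have hz're : z'.re = x₀ := by simp [hz'def]
  have hz' : z' ∈ slitPlane' := (slit_iff z').2 (Or.inl (by rw [hz'im]; exact ht.ne'))
  have hd := hη_sq z' hz'
  set d : ℂ := η z' - z' with hddef
  set p : ℝ := d.re with hpdef
  set q : ℝ := d.im with hqdef
  have h1 : p^2 - q^2 = x₀^2 - t^2 - 1 := by
    have := congrArg Complex.re hd
    simpa [pow_two, Complex.mul_re, hz're, hz'im] using this
  have h2 : p * q = x₀ * t := by
    have := congrArg Complex.im hd
    simp [pow_two, Complex.mul_im, hz're, hz'im] at this
    linarith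
  have hw2 : (‖η z'‖)^2 = (x₀ + p)^2 + (t + q)^2 := by
    have hηz' : η z' = z' + d := by rw [hddef]; ring
    rw [Complex.sq_norm, Complex.normSq_apply, hηz']
    simp [hz're, hz'im, ← hpdef, ← hqdef]
    ring
  clear_value p q d
  have hx2 : x₀^2 ≤ 1 := by nlinarith [_root_.sq_abs x₀, abs_nonneg x₀, hx]
  have hq2 : q^2 = p^2 + (1 - x₀^2 + t^2) := by linarith
  have hnn : (0:ℝ) ≤ 1 - x₀^2 + t^2 := by nlinarith [sq_nonneg t]
  have e1 : p^2*q^2 = p^2*p^2 + p^2*(1-x₀^2+t^2) := by linear_combination p^2 * hq2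
  have e2 : p^2*q^2 = (x₀*t)^2 := by linear_combination (p*q + x₀*t) * h2
  have e3 : (x₀*t)^2 ≤ t^2 := by
    nlinarith [mul_nonneg (show (0:ℝ) ≤ 1 - x₀^2 by linarith) (sq_nonneg t)]
  have hp4 : p^2 * p^2 ≤ t^2 := by
    have := mul_nonneg (sq_nonneg p) hnn
    linarith
  have hp2 : p^2 ≤ t := by
    by_contra hc
    push_neg at hc
    have : t^2 < p^2 * p^2 := by nlinarith [ht]
    linarith
  have hst : Real.sqrt t ≤ 1 := by simpa using Real.sqrt_le_sqrt ht1
  have htst : t ≤ Real.sqrt t := by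
    nlinarith [Real.sq_sqrt ht.le, Real.sqrt_nonneg t]
  have hpabs : |p| ≤ Real.sqrt t := by
    rw [← Real.sqrt_sq_eq_abs]
    exact Real.sqrt_le_sqrt hp2
  have hqabs : |q| ≤ 1 + t := by
    have : q^2 ≤ (1+t)^2 := by nlinarith
    rw [← Real.sqrt_sq_eq_abs]
    calc Real.sqrt (q^2) ≤ Real.sqrt ((1+t)^2) := Real.sqrt_le_sqrt this
      _ = 1 + t := Real.sqrt_sq (by linarith)
  have hxp : x₀ * p ≤ Real.sqrt t := by
    calc x₀ * p ≤ |x₀ * p| := le_abs_self _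
      _ = |x₀| * |p| := abs_mul _ _
      _ ≤ 1 * Real.sqrt t := by
          apply mul_le_mul hx hpabs (abs_nonneg _) zero_le_one
      _ = Real.sqrt t := one_mul _
  have htq : t * q ≤ t * (1 + t) :=
    mul_le_mul_of_nonneg_left (abs_le.1 hqabs).2 ht.le
  have expand : (x₀ + p)^2 + (t + q)^2
      = 1 + 2*p^2 + 2*t^2 + 2*(x₀*p) + 2*(t*q) := by
    linear_combination hq2
  have htt : t^2 ≤ t := by
    calc t^2 = t*t := by ring
      _ ≤ t*1 := mul_le_mul_of_nonneg_left ht1 ht.le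
      _ = t := mul_one t
  have ht2 : t^2 ≤ Real.sqrt t := le_trans htt htst
  have hwle : (‖η z'‖)^2 ≤ 1 + 10 * Real.sqrt t := by
    rw [hw2, expand]
    linarith [hp2, hxp, htq, htst, ht2]
  have h5t : (0:ℝ) ≤ 1 + 5*Real.sqrt t := by positivity
  have hsq : (‖η z'‖)^2 ≤ (1+5*Real.sqrt t)^2 := by
    have he : (1+5*Real.sqrt t)^2 = 1 + 10*Real.sqrt t + 25*(Real.sqrt t*Real.sqrt t) := by ring
    have h25 : 0 ≤ 25*(Real.sqrt t*Real.sqrt t) := by positivity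
    rw [he]; linarith
  have habs : ‖η z'‖ ≤ 1 + 5 * Real.sqrt t := by
    have hs := Real.sqrt_le_sqrt hsq
    rwa [Real.sqrt_sq (norm_nonneg _), Real.sqrt_sq h5t] at hs
  rw [hf_on z' hz']
  calc Real.log (‖η z'‖) ≤ Real.log (1 + 5 * Real.sqrt t) :=
        (Real.log_le_log_iff (by linarith [hgt z' hz']) (by positivity)).2 habs
    _ ≤ (1 + 5 * Real.sqrt t) - 1 :=
        Real.log_le_sub_one_of_pos (by positivity)
    _ = 5 * Real.sqrt t := by ring

lemma sq_bound : ∀ z ∈ slitPlane', ∀ z' ∈ slitPlane',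
    |f z - f z'|^2 ≤ 2 * ‖z - z'‖ := by
  intro z hz z' hz'
  have h1 := f_nonneg η f hgt hf_on z hz
  have h2 := f_nonneg η f hgt hf_on z' hz'
  have K := key_ineq η f hη_sq hgt hf_on z hz z' hz'
  set m : ℝ := (f z + f z')/2 with hm
  have hm0 : 0 ≤ m := by rw [hm]; linarith
  have hΔ : |f z - f z'| ≤ 2 * m := by
    rw [abs_le]; constructor <;> rw [hm] <;> linarith
  have hsm : m ≤ Real.sinh m := Real.self_le_sinh_iff.2 hm0
  have habs0 : 0 ≤ |f z - f z'| := abs_nonneg _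
  calc |f z - f z'|^2 = |f z - f z'| * |f z - f z'| := by ring
    _ ≤ |f z - f z'| * (2 * m) := mul_le_mul_of_nonneg_left hΔ habs0
    _ = 2 * (|f z - f z'| * m) := by ring
    _ ≤ 2 * (|f z - f z'| * Real.sinh m) := by
        have := mul_le_mul_of_nonneg_left hsm habs0
        linarith
    _ ≤ 2 * ‖z - z'‖ := by linarith [K]

end Eta
/-- There is an absolute constant `C` such that `f(z) = log |η(z)|`
(`η(z) = z + √(z²-1)`, extended by `0` on `[-1,1]`) satisfies
`|f z - f z₀| ≤ C √ε` whenever `|z - z₀| ≤ ε · max {2, |z₀|}` and `0 ≤ ε ≤ 1/8`. -/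
theorem log_abs_eta_holder (η : ℂ → ℂ) (f : ℂ → ℝ)
    (hη_holo : DifferentiableOn ℂ η slitPlane')
    (hη_sq : ∀ z ∈ slitPlane', (η z - z) ^ 2 = z ^ 2 - 1)
    (hη_real : ∀ x : ℝ, 1 < x → η x = ((η x).re : ℂ) ∧ 1 < (η x).re)
    (hf_on : ∀ z ∈ slitPlane', f z = Real.log ‖η z‖)
    (hf_off : ∀ z ∉ slitPlane', f z = 0) :
    ∃ C : ℝ, 0 < C ∧ ∀ (ε : ℝ) (z z₀ : ℂ), 0 ≤ ε → ε ≤ 1 / 8 →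
      ‖z - z₀‖ ≤ ε * max 2 (‖z₀‖) →
      |f z - f z₀| ≤ C * Real.sqrt ε := by
  have hgt := eta_abs_gt η hη_sq hη_holo hη_real
  have hfnn := f_nonneg η f hgt hf_on
  have hcoshf := coshf η f hη_sq hf_on
  have hkey := key_ineq η f hη_sq hgt hf_on
  have hbd := boundary_est η f hη_sq hgt hf_on
  have hsqb := sq_bound η f hη_sq hgt hf_on
  refine ⟨10, by norm_num, ?_⟩
  intro ε z z₀ hε hε8 hle
  have hsε : 0 ≤ Real.sqrt ε := Real.sqrt_nonneg ε
  have hεsε : ε ≤ Real.sqrt ε := by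
    have h := Real.mul_self_sqrt hε
    have hsε1 : Real.sqrt ε ≤ 1 := by
      have := Real.sqrt_le_sqrt (show ε ≤ 1 by linarith)
      simpa using this
    nlinarith
  -- points off the slit plane have |·| ≤ 1
  have habs1 : ∀ w : ℂ, w ∉ slitPlane' → ‖w‖ ≤ 1 := by
    intro w hw
    have hnot : w.im = 0 ∧ -1 ≤ w.re ∧ w.re ≤ 1 := by by_contra hc; exact hw hc
    obtain ⟨him, h1, h2⟩ := hnot
    have hweq : w = ((w.re : ℝ) : ℂ) := Complex.ext (by simp) (by simp [him])
    rw [hweq, Complex.norm_real, Real.norm_eq_abs]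
    exact abs_le.2 ⟨h1, h2⟩
  -- the mixed case
  have mixed : ∀ w w₀ : ℂ, w ∈ slitPlane' → w₀ ∉ slitPlane' →
      ‖w - w₀‖ ≤ 2 * ε → 0 < ε → |f w - f w₀| ≤ 10 * Real.sqrt ε := by
    intro w w₀ hw hw₀ hwle hεpos
    have hnot : w₀.im = 0 ∧ -1 ≤ w₀.re ∧ w₀.re ≤ 1 := by by_contra hc; exact hw₀ hc
    obtain ⟨him, hre1, hre2⟩ := hnot
    have hw₀eq : w₀ = ((w₀.re : ℝ) : ℂ) := Complex.ext (by simp) (by simp [him])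
    set w' : ℂ := ((w₀.re : ℝ) : ℂ) + (ε : ℂ) * Complex.I with hw'def
    have hw'im : w'.im = ε := by simp [hw'def]
    have hw' : w' ∈ slitPlane' := (slit_iff w').2 (Or.inl (by rw [hw'im]; exact hεpos.ne'))
    have hfw' : f w' ≤ 5 * Real.sqrt ε :=
      hbd w₀.re ε (abs_le.2 ⟨hre1, hre2⟩) hεpos (by linarith)
    have hfw'0 : 0 ≤ f w' := hfnn w' hw'
    have hdist : ‖w - w'‖ ≤ 3 * ε := by
      have h1 : ‖w₀ - w'‖ = ε := by
        nth_rewrite 1 [hw₀eq]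
        rw [hw'def]
        rw [show ((w₀.re : ℝ) : ℂ) - (((w₀.re : ℝ) : ℂ) + (ε : ℂ) * Complex.I)
            = -((ε : ℂ) * Complex.I) from by ring]
        simpa using _root_.abs_of_nonneg hε
      calc ‖w - w'‖ = ‖(w - w₀) + (w₀ - w')‖ := by
            rw [show (w - w₀) + (w₀ - w') = w - w' from by ring]
        _ ≤ ‖w - w₀‖ + ‖w₀ - w'‖ := norm_add_le _ _
        _ ≤ 2 * ε + ε := by rw [h1]; linarith
        _ = 3 * ε := by ring
    have hsq := hsqb w hw w' hw'
    have hsq2 : |f w - f w'|^2 ≤ (2.5 * Real.sqrt ε)^2 := by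
      have he : (2.5 * Real.sqrt ε)^2 = 6.25 * ε := by
        rw [mul_pow, Real.sq_sqrt hε]; norm_num
      rw [he]
      calc |f w - f w'|^2 ≤ 2 * ‖w - w'‖ := hsq
        _ ≤ 2 * (3 * ε) := by linarith
        _ ≤ 6.25 * ε := by linarith
    have h25 : |f w - f w'| ≤ 2.5 * Real.sqrt ε :=
      le_of_sq_le' (abs_nonneg _) (by positivity) hsq2
    have hfw₀ : f w₀ = 0 := hf_off w₀ hw₀
    have htri : |f w - f w₀| ≤ |f w - f w'| + |f w' - f w₀| := by
      rw [show f w - f w₀ = (f w - f w') + (f w' - f w₀) from by ring]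
      exact abs_add_le _ _
    have hlast : |f w' - f w₀| = f w' := by
      rw [hfw₀, sub_zero, _root_.abs_of_nonneg hfw'0]
    rw [hlast] at htri
    linarith
  -- positivity of ε in the mixed cases
  have hεpos_of_ne : z ≠ z₀ → 0 < ε := by
    intro hne
    rcases hε.eq_or_lt with heq | h
    · exfalso
      rw [← heq, zero_mul] at hle
      have := norm_nonneg (z - z₀)
      have h0 : ‖z - z₀‖ = 0 := le_antisymm hle this
      rw [norm_eq_zero, sub_eq_zero] at h0
      exact hne h0
    · exact h
  by_cases hz : z ∈ slitPlane' <;> by_cases hz₀ : z₀ ∈ slitPlane'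
  · -- both on the slit plane
    have h1 := hfnn z hz
    have h2 := hfnn z₀ hz₀
    rcases le_or_gt (‖z₀‖) 2 with hb2 | hb2
    · -- |z₀| ≤ 2
      rw [max_eq_left hb2] at hle
      have hsq2 : |f z - f z₀|^2 ≤ (2 * Real.sqrt ε)^2 := by
        have he : (2 * Real.sqrt ε)^2 = 4 * ε := by
          rw [mul_pow, Real.sq_sqrt hε]; norm_num
        rw [he]
        calc |f z - f z₀|^2 ≤ 2 * ‖z - z₀‖ := hsqb z hz z₀ hz₀
          _ ≤ 2 * (ε * 2) := by linarith
          _ = 4 * ε := by ring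
      have := le_of_sq_le' (abs_nonneg _) (by positivity) hsq2
      linarith
    · -- |z₀| > 2
      rw [max_eq_right hb2.le] at hle
      have hA : 0 ≤ ‖z₀‖ := norm_nonneg _
      have hzlb : (7/8) * ‖z₀‖ ≤ ‖z‖ := by
        have h3 : ‖z₀‖ ≤ ‖z‖ + ‖z₀ - z‖ := by
          calc ‖z₀‖ = ‖z + (z₀ - z)‖ := by
                rw [show z + (z₀ - z) = z₀ from by ring]
            _ ≤ _ := norm_add_le _ _
        have h4 : ‖z₀ - z‖ = ‖z - z₀‖ := by
          exact norm_sub_rev z₀ z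
        have h5 : ε * ‖z₀‖ ≤ (1/8) * ‖z₀‖ :=
          mul_le_mul_of_nonneg_right hε8 hA
        rw [h4] at h3
        linarith
      have he1 : ‖z‖ ≤ Real.exp (f z) := by
        calc ‖z‖ ≤ Real.cosh (f z) := hcoshf z hz
          _ ≤ Real.exp (f z) := by
            rw [Real.cosh_eq]
            have := Real.exp_le_exp.2 (show -(f z) ≤ f z by linarith)
            linarith
      have he2 : ‖z₀‖ ≤ Real.exp (f z₀) := by
        calc ‖z₀‖ ≤ Real.cosh (f z₀) := hcoshf z₀ hz₀
          _ ≤ Real.exp (f z₀) := by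
            rw [Real.cosh_eq]
            have := Real.exp_le_exp.2 (show -(f z₀) ≤ f z₀ by linarith)
            linarith
      set m : ℝ := (f z + f z₀)/2 with hm
      have hm0 : 0 ≤ m := by rw [hm]; linarith
      have hem : 0.9 * ‖z₀‖ ≤ Real.exp m := by
        apply le_of_sq_le' (by positivity) (Real.exp_pos m).le
        have hexp2 : Real.exp m * Real.exp m = Real.exp (f z) * Real.exp (f z₀) := by
          rw [← Real.exp_add, ← Real.exp_add]
          congr 1
          rw [hm]; ring
        have t1 : (7/8) * ‖z₀‖ * ‖z₀‖ ≤ ‖z‖ * ‖z₀‖ :=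
          mul_le_mul_of_nonneg_right hzlb hA
        have t2 : ‖z‖ * ‖z₀‖ ≤ Real.exp (f z) * Real.exp (f z₀) :=
          mul_le_mul he1 he2 hA (Real.exp_pos _).le
        nlinarith [sq_nonneg (‖z₀‖)]
      have hsinh : 0.2 * ‖z₀‖ ≤ Real.sinh m := by
        rw [Real.sinh_eq]
        have hle1 : Real.exp (-m) ≤ 1 := Real.exp_le_one_iff.2 (by linarith)
        linarith
      have K := hkey z hz z₀ hz₀
      rw [← hm] at K
      have hmul : |f z - f z₀| * (0.2 * ‖z₀‖) ≤ ε * ‖z₀‖ := by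
        calc |f z - f z₀| * (0.2 * ‖z₀‖) ≤ |f z - f z₀| * Real.sinh m :=
              mul_le_mul_of_nonneg_left hsinh (abs_nonneg _)
          _ ≤ ‖z - z₀‖ := K
          _ ≤ ε * ‖z₀‖ := hle
      have hfin : |f z - f z₀| ≤ 5 * ε := by
        nlinarith [hmul, hb2, abs_nonneg (f z - f z₀), hε]
      linarith
  · -- z on the slit plane, z₀ off it
    have hεpos : 0 < ε := hεpos_of_ne (fun h => hz₀ (h ▸ hz))
    have hmax : max 2 (‖z₀‖) = 2 := max_eq_left (by linarith [habs1 z₀ hz₀])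
    rw [hmax] at hle
    exact mixed z z₀ hz hz₀ (by linarith) hεpos
  · -- z off the slit plane, z₀ on it
    have hεpos : 0 < ε := hεpos_of_ne (fun h => hz (h ▸ hz₀))
    have hz1 := habs1 z hz
    have hb2 : ‖z₀‖ ≤ 2 := by
      by_contra hc
      push_neg at hc
      rw [max_eq_right hc.le] at hle
      have h3 : ‖z₀‖ ≤ ‖z‖ + ‖z₀ - z‖ := by
        calc ‖z₀‖ = ‖z + (z₀ - z)‖ := by
              rw [show z + (z₀ - z) = z₀ from by ring]
          _ ≤ _ := norm_add_le _ _
      have h4 : ‖z₀ - z‖ = ‖z - z₀‖ := by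
        exact norm_sub_rev z₀ z
      have h5 : ε * ‖z₀‖ ≤ (1/8) * ‖z₀‖ :=
        mul_le_mul_of_nonneg_right hε8 (norm_nonneg _)
      rw [h4] at h3
      linarith
    rw [max_eq_left hb2] at hle
    have h4 : ‖z₀ - z‖ = ‖z - z₀‖ := by
      exact norm_sub_rev z₀ z
    have := mixed z₀ z hz₀ hz (by rw [h4]; linarith) hεpos
    rw [abs_sub_comm] at this
    exact this
  · -- both off the slit plane
    rw [hf_off z hz, hf_off z₀ hz₀]
    simp
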